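/- The integral over the real line ∫_ℝ (−ix² − x + 4i)/((x − i)³(x + i)²) dx equals −3π/2. -/

import Mathlib

open Complex Real MeasureTheory Filter Topology

/-! Partial fractions split the integrand as
`-(3/2) (1 + x²)⁻¹ + (3/4) (x - i)⁻² - i (x - i)⁻³ + (3/4) (x + i)⁻²`.
For `c` off the real line and `n ≥ 2`, `(x - c)⁻ⁿ` is integrable and has the antiderivative
`-(x - c)^(1-n) / (n - 1)`, which vanishes at `±∞`, so its integral is `0`; only the arctangent
term survives, contributing `-(3/2) π`. -/

lemma ofReal_sub_ne_zero {c : ℂ} (hc : c.im ≠ 0) (x : ℝ) : (x : ℂ) - c ≠ 0 :=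
  fun h => hc (by simpa using congrArg im h)

lemma norm_ofReal_sub_I_sq (x : ℝ) : ‖(x : ℂ) - I‖ ^ 2 = 1 + x ^ 2 := by
  rw [Complex.sq_norm, Complex.normSq_apply]
  simp only [sub_re, ofReal_re, I_re, sub_zero, sub_im, ofReal_im, I_im, zero_sub]
  ring

lemma integrable_inv_ofReal_sub_I_pow {n : ℕ} (hn : 2 ≤ n) :
    Integrable fun x : ℝ => (((x : ℂ) - I) ^ n)⁻¹ := by
  refine integrable_inv_one_add_sq.mono' (by fun_prop) (Eventually.of_forall fun x => ?_)
  have hone : 1 ≤ ‖(x : ℂ) - I‖ := by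
    nlinarith [norm_ofReal_sub_I_sq x, norm_nonneg ((x : ℂ) - I), sq_nonneg x]
  rw [norm_inv, norm_pow, ← norm_ofReal_sub_I_sq]
  exact inv_anti₀ (by positivity) (pow_le_pow_right₀ hone hn)

lemma ofReal_sub_eq_im_mul {c : ℂ} (hc : c.im ≠ 0) (x : ℝ) :
    (x : ℂ) - c = c.im * (((x - c.re) / c.im : ℝ) - I) := by
  apply Complex.ext <;> simp [mul_div_cancel₀ _ hc]

lemma integrable_inv_ofReal_sub_pow {c : ℂ} (hc : c.im ≠ 0) {n : ℕ} (hn : 2 ≤ n) :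
    Integrable fun x : ℝ => (((x : ℂ) - c) ^ n)⁻¹ := by
  simp_rw [ofReal_sub_eq_im_mul hc, mul_pow, mul_inv]
  exact (((integrable_inv_ofReal_sub_I_pow hn).comp_div hc).comp_sub_right c.re).const_mul _

lemma tendsto_norm_ofReal_sub_cocompact (c : ℂ) :
    Tendsto (fun x : ℝ => ‖(x : ℂ) - c‖) (cocompact ℝ) atTop := by
  refine tendsto_atTop_mono (fun x => ?_)
    (tendsto_atTop_add_const_right _ (-‖c‖) tendsto_norm_cocompact_atTop)
  have := norm_sub_norm_le (x : ℂ) c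
  rw [Complex.norm_real] at this
  linarith

lemma tendsto_inv_ofReal_sub_pow_cocompact (c : ℂ) {n : ℕ} (hn : n ≠ 0) :
    Tendsto (fun x : ℝ => (((x : ℂ) - c) ^ n)⁻¹) (cocompact ℝ) (𝓝 0) := by
  rw [tendsto_zero_iff_norm_tendsto_zero]
  simpa only [norm_inv, norm_pow, Function.comp_def, Pi.inv_def] using
    ((tendsto_pow_atTop hn).comp (tendsto_norm_ofReal_sub_cocompact c)).inv_tendsto_atTop

lemma hasDerivAt_inv_ofReal_sub_pow {c : ℂ} {x : ℝ} (hx : (x : ℂ) - c ≠ 0) (n : ℕ) :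
    HasDerivAt (fun y : ℝ => (((y : ℂ) - c) ^ (n + 1))⁻¹)
      (-(n + 1) * (((x : ℂ) - c) ^ (n + 2))⁻¹) x := by
  have hpow := ((hasDerivAt_id' (x : ℂ)).sub_const c).fun_pow (n + 1)
  refine ((hpow.inv (pow_ne_zero _ hx)).comp_ofReal).congr_deriv ?_
  rw [Nat.add_sub_cancel]
  field_simp
  push_cast
  ring

lemma integral_inv_ofReal_sub_pow_eq_zero {c : ℂ} (hc : c.im ≠ 0) {n : ℕ} (hn : 2 ≤ n) :
    ∫ x : ℝ, (((x : ℂ) - c) ^ n)⁻¹ = 0 := by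
  obtain ⟨m, rfl⟩ := Nat.exists_eq_add_of_le' hn
  have hlim := tendsto_inv_ofReal_sub_pow_cocompact c m.succ_ne_zero
  have hftc := integral_of_hasDerivAt_of_tendsto
    (fun x => hasDerivAt_inv_ofReal_sub_pow (ofReal_sub_ne_zero hc x) m)
    ((integrable_inv_ofReal_sub_pow hc hn).const_mul _)
    (hlim.mono_left atBot_le_cocompact) (hlim.mono_left atTop_le_cocompact)
  rw [integral_const_mul, sub_zero, mul_eq_zero] at hftc
  exact hftc.resolve_left (by norm_cast)

lemma integral_ofReal_inv_one_add_sq : ∫ x : ℝ, (((1 + x ^ 2)⁻¹ : ℝ) : ℂ) = π := by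
  rw [integral_complex_ofReal, integral_univ_inv_one_add_sq]

lemma integrand_eq_partial_fractions (x : ℝ) :
    (-I * (x : ℂ) ^ 2 - (x : ℂ) + 4 * I) / (((x : ℂ) - I) ^ 3 * ((x : ℂ) + I) ^ 2) =
      -(3 / 2) * (((1 + x ^ 2)⁻¹ : ℝ) : ℂ) + 3 / 4 * (((x : ℂ) - I) ^ 2)⁻¹
        - I * (((x : ℂ) - I) ^ 3)⁻¹ + 3 / 4 * (((x : ℂ) - -I) ^ 2)⁻¹ := by
  have hsub := ofReal_sub_ne_zero (c := I) (by simp) x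
  have hadd := ofReal_sub_ne_zero (c := -I) (by simp) x
  have hfactor : ((1 + x ^ 2 : ℝ) : ℂ) = ((x : ℂ) - I) * ((x : ℂ) + I) := by
    push_cast
    linear_combination I_sq
  rw [sub_neg_eq_add] at hadd ⊢
  rw [ofReal_inv, hfactor]
  field_simp
  grind [I_sq]

theorem stmt_19 :
    ∫ x : ℝ, (-I * (x : ℂ) ^ 2 - (x : ℂ) + 4 * I) / (((x : ℂ) - I) ^ 3 * ((x : ℂ) + I) ^ 2) = -(3 * (Real.pi : ℂ) / 2) := by
  have hI : I.im ≠ 0 := by simp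
  have hnegI : (-I).im ≠ 0 := by simp
  have h₁ := (integrable_inv_one_add_sq.ofReal (𝕜 := ℂ)).const_mul (-(3 / 2))
  have h₂ := (integrable_inv_ofReal_sub_pow hI le_rfl).const_mul (3 / 4)
  have h₃ := (integrable_inv_ofReal_sub_pow hI (by norm_num : 2 ≤ 3)).const_mul I
  have h₄ := (integrable_inv_ofReal_sub_pow hnegI le_rfl).const_mul (3 / 4)
  simp_rw [integrand_eq_partial_fractions]
  rw [integral_add (by exact (h₁.add h₂).sub h₃) h₄,
    integral_sub (by exact h₁.add h₂) h₃, integral_add (by exact h₁) (by exact h₂),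
    integral_const_mul, integral_const_mul, integral_const_mul, integral_const_mul,
    integral_ofReal_inv_one_add_sq,
    integral_inv_ofReal_sub_pow_eq_zero hI le_rfl,
    integral_inv_ofReal_sub_pow_eq_zero hI (by norm_num),
    integral_inv_ofReal_sub_pow_eq_zero hnegI le_rfl]
  ring
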